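/- Let O ⊆ ℝ^d be open, α ∈ ℤ_{≥0}^{d-1}, and for each multi-index β ≤ α let V^β : O → ℝ^d be C² and Q^β : O → ℝ be C¹. Suppose that for every β ≤ α one has on O: −ΔV^β + ∇Q^β = F^β and ∇·V^β = G^β, where F^β = Σ_{i=1}^{d-1} ( 2 binom(β_i,2) V^{β−2ε_i} + 2 β_i ∂_i V^{β−ε_i} − β_i Q^{β−ε_i} e_i ) and G^β = −Σ_{i=1}^{d-1} β_i (V^{β−ε_i})_i. Then the functions v^α(x,y) = Σ_{β≤α} binom(α,β) x^{α−β} V^β(x,y) and q^α(x,y) = Σ_{β≤α} binom(α,β) x^{α−β} Q^β(x,y) satisfy −Δv^α + ∇q^α = 0 and ∇·v^α = 0 on O. -/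

import Mathlib

noncomputable section

/-- Partial derivative `∂_i f` of a scalar function on `ℝ^d = ℝ^{n+1}`
(the last coordinate is `y`). -/
def pd (n : ℕ) (i : Fin (n + 1)) (f : (Fin (n + 1) → ℝ) → ℝ) : (Fin (n + 1) → ℝ) → ℝ :=
  fun z => fderiv ℝ f z (Pi.single i 1)

/-- Laplacian `Δ = ∂_1² + ⋯ + ∂_{d-1}² + ∂_y²`. -/
def lapF (n : ℕ) (f : (Fin (n + 1) → ℝ) → ℝ) : (Fin (n + 1) → ℝ) → ℝ :=
  fun z => ∑ i : Fin (n + 1), pd n i (pd n i f) z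

/-- Generalized binomial coefficient `binom(α,β) = ∏ᵢ binom(αᵢ,βᵢ)`. -/
def mchoose {n : ℕ} (α β : Fin n → ℕ) : ℕ := ∏ i, (α i).choose (β i)

/-- The monomial `x^{α-β} = ∏ᵢ xᵢ^{αᵢ-βᵢ}` (in the horizontal variables). -/
def xmono {n : ℕ} (α β : Fin n → ℕ) (z : Fin (n + 1) → ℝ) : ℝ :=
  ∏ i : Fin n, z i.castSucc ^ (α i - β i)

/-- Coercion of a multi-index to an integer multi-index. -/
def mcast {n : ℕ} (β : Fin n → ℕ) : Fin n → ℤ := fun i => (β i : ℤ)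

lemma sum_shift {n : ℕ} (α : Fin n → ℕ) (i : Fin n) (F : (Fin n → ℕ) → ℝ)
    (h0 : ∀ β : Fin n → ℕ, β i = 0 → F β = 0)
    (h1 : ∀ γ : Fin n → ℕ, α i ≤ γ i → F (γ + Pi.single i 1) = 0) :
    ∑ β ∈ Finset.Iic α, F β = ∑ γ ∈ Finset.Iic α, F (γ + Pi.single i 1) := by
  classical
  have e1 : ∑ β ∈ Finset.Iic α, F β
      = ∑ β ∈ (Finset.Iic α).filter (fun β => β i ≠ 0), F β := by
    refine (Finset.sum_filter_of_ne ?_).symm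
    intro β _ hF hβ0
    exact hF (h0 β hβ0)
  have e2 : ∑ γ ∈ Finset.Iic α, F (γ + Pi.single i 1)
      = ∑ γ ∈ (Finset.Iic α).filter (fun γ => γ i < α i), F (γ + Pi.single i 1) := by
    refine (Finset.sum_filter_of_ne ?_).symm
    intro γ _ hF
    by_contra h
    exact hF (h1 γ (not_lt.mp h))
  rw [e1, e2]
  refine Finset.sum_nbij' (i := fun β => β - Pi.single i 1)
    (j := fun γ => γ + Pi.single i 1) ?_ ?_ ?_ ?_ ?_
  · intro β hβ
    simp only [Finset.mem_filter, Finset.mem_Iic, Pi.le_def] at hβ ⊢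
    refine ⟨fun j => le_trans (by simp [Pi.sub_apply]) (hβ.1 j), ?_⟩
    have h1' : β i ≠ 0 := hβ.2
    have h2' : β i ≤ α i := hβ.1 i
    simp only [Pi.sub_apply, Pi.single_eq_same]
    omega
  · intro γ hγ
    simp only [Finset.mem_filter, Finset.mem_Iic, Pi.le_def] at hγ ⊢
    refine ⟨fun j => ?_, by simp⟩
    by_cases h : j = i
    · subst h; simp only [Pi.add_apply, Pi.single_eq_same]; omega
    · simpa [Pi.single_eq_of_ne h] using hγ.1 j
  · intro β hβ
    simp only [Finset.mem_filter, Finset.mem_Iic, Pi.le_def] at hβ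
    funext j
    by_cases h : j = i
    · subst h
      have : β j ≠ 0 := hβ.2
      simp only [Pi.add_apply, Pi.sub_apply, Pi.single_eq_same]
      omega
    · simp [Pi.single_eq_of_ne h]
  · intro γ _
    funext j
    by_cases h : j = i
    · subst h; simp
    · simp [Pi.single_eq_of_ne h]
  · intro β hβ
    simp only [Finset.mem_filter, Finset.mem_Iic, Pi.le_def] at hβ
    congr 1
    funext j
    by_cases h : j = i
    · subst h
      have : β j ≠ 0 := hβ.2
      simp only [Pi.add_apply, Pi.sub_apply, Pi.single_eq_same]
      omega
    · simp [Pi.single_eq_of_ne h]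

lemma two_mul_choose_two (b : ℕ) : 2 * Nat.choose b 2 = b * (b - 1) := by
  induction b with
  | zero => simp
  | succ m ih =>
    rw [Nat.choose_succ_succ, Nat.mul_add, ih, Nat.choose_one_right]
    cases m with
    | zero => simp
    | succ l =>
      simp only [Nat.succ_sub_one]
      ring

lemma mchoose_zero_of_lt {n : ℕ} {α β : Fin n → ℕ} (i : Fin n) (h : α i < β i) :
    mchoose α β = 0 := by
  classical
  exact Finset.prod_eq_zero (Finset.mem_univ i) (Nat.choose_eq_zero_of_lt h)

lemma mchoose_succ_mul {n : ℕ} (α β : Fin n → ℕ) (i : Fin n) :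
    mchoose α (β + Pi.single i 1) * (β i + 1) = mchoose α β * (α i - β i) := by
  classical
  unfold mchoose
  rw [← Finset.prod_erase_mul _ _ (Finset.mem_univ i),
      ← Finset.prod_erase_mul _ _ (Finset.mem_univ i)]
  have he : ∀ j ∈ (Finset.univ : Finset (Fin n)).erase i,
      (α j).choose ((β + Pi.single i 1 : Fin n → ℕ) j) = (α j).choose (β j) := by
    intro j hj
    have : j ≠ i := (Finset.mem_erase.mp hj).1
    simp [Pi.single_eq_of_ne this]
  rw [Finset.prod_congr rfl he]
  have : (β + Pi.single i 1 : Fin n → ℕ) i = β i + 1 := by simp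
  rw [this, mul_assoc, mul_assoc, Nat.choose_succ_right_eq]

lemma mcast_add_single_sub {n : ℕ} (β : Fin n → ℕ) (i : Fin n) :
    mcast (β + Pi.single i 1) - Pi.single i 1 = mcast β := by
  classical
  funext j
  by_cases h : j = i
  · subst h; simp [mcast]
  · simp [mcast, Pi.single_eq_of_ne h]

lemma mcast_add_single_single_sub {n : ℕ} (β : Fin n → ℕ) (i : Fin n) :
    mcast (β + Pi.single i 1 + Pi.single i 1) - 2 • Pi.single i 1 = mcast β := by
  classical
  funext j
  by_cases h : j = i
  · subst h; simp [mcast]; ring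
  · simp [mcast, Pi.single_eq_of_ne h]

lemma key1 {n : ℕ} (α : Fin n → ℕ) (i : Fin n) (T : (Fin n → ℤ) → ℝ)
    (z : Fin (n + 1) → ℝ) :
    ∑ β ∈ Finset.Iic α, (mchoose α β : ℝ) * xmono α β z *
        ((β i : ℝ) * T (mcast β - Pi.single i 1))
      = ∑ β ∈ Finset.Iic α, (mchoose α β : ℝ) * xmono α (β + Pi.single i 1) z *
        (((α i - β i : ℕ) : ℝ) * T (mcast β)) := by
  classical
  rw [sum_shift α i _ ?_ ?_]
  · refine Finset.sum_congr rfl fun γ _ => ?_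
    rw [mcast_add_single_sub]
    have h1 : ((γ) + Pi.single i 1 : Fin n → ℕ) i = γ i + 1 := by simp
    have h2 : (mchoose α (γ + Pi.single i 1) : ℝ) * ((γ i : ℝ) + 1)
        = (mchoose α γ : ℝ) * ((α i - γ i : ℕ) : ℝ) := by
      have := mchoose_succ_mul α γ i
      have := congrArg (Nat.cast (R := ℝ)) this
      push_cast at this
      linarith
    rw [h1]
    push_cast
    linear_combination (xmono α (γ + Pi.single i 1) z * T (mcast γ)) * h2
  · intro β hβ
    rw [hβ]
    simp
  · intro γ hγ
    have : α i < ((γ) + Pi.single i 1 : Fin n → ℕ) i := by simp; omega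
    rw [mchoose_zero_of_lt i this]
    simp

lemma mchoose_two_mul {n : ℕ} (α δ : Fin n → ℕ) (i : Fin n) :
    mchoose α (δ + Pi.single i 1 + Pi.single i 1) * (2 * Nat.choose (δ i + 2) 2)
      = mchoose α δ * (α i - δ i) * (α i - (δ i + 1)) := by
  classical
  have e1 : ((δ + Pi.single i 1 : Fin n → ℕ) i) = δ i + 1 := by simp
  have e2 : 2 * Nat.choose (δ i + 2) 2 = (δ i + 2) * (δ i + 1) := by
    rw [two_mul_choose_two]; simp
  rw [e2]
  calc mchoose α (δ + Pi.single i 1 + Pi.single i 1) * ((δ i + 2) * (δ i + 1))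
      = (mchoose α (δ + Pi.single i 1 + Pi.single i 1) * ((δ + Pi.single i 1 : Fin n → ℕ) i + 1)) * (δ i + 1) := by
        rw [e1]; ring
    _ = (mchoose α (δ + Pi.single i 1) * (α i - (δ + Pi.single i 1 : Fin n → ℕ) i)) * (δ i + 1) := by
        rw [mchoose_succ_mul]
    _ = (mchoose α (δ + Pi.single i 1) * (δ i + 1)) * (α i - (δ i + 1)) := by
        rw [e1]; ring
    _ = mchoose α δ * (α i - δ i) * (α i - (δ i + 1)) := by
        rw [mchoose_succ_mul]

lemma key2 {n : ℕ} (α : Fin n → ℕ) (i : Fin n) (T : (Fin n → ℤ) → ℝ)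
    (z : Fin (n + 1) → ℝ) :
    ∑ β ∈ Finset.Iic α, (mchoose α β : ℝ) * xmono α β z *
        (2 * ((β i).choose 2 : ℝ) * T (mcast β - 2 • Pi.single i 1))
      = ∑ β ∈ Finset.Iic α, (mchoose α β : ℝ) *
          xmono α (β + Pi.single i 1 + Pi.single i 1) z *
        (((α i - β i : ℕ) : ℝ) * ((α i - (β i + 1) : ℕ) : ℝ) * T (mcast β)) := by
  classical
  rw [sum_shift α i _ ?_ ?_, sum_shift α i _ ?_ ?_]
  · refine Finset.sum_congr rfl fun δ _ => ?_
    rw [mcast_add_single_single_sub]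
    have h1 : ((δ) + Pi.single i 1 + Pi.single i 1 : Fin n → ℕ) i = δ i + 2 := by simp
    have h2 := mchoose_two_mul α δ i
    have h2' := congrArg (Nat.cast (R := ℝ)) h2
    push_cast at h2'
    rw [h1]
    push_cast
    linear_combination (xmono α (δ + Pi.single i 1 + Pi.single i 1) z * T (mcast δ)) * h2'
  · intro β hβ
    have : ((β) + Pi.single i 1 : Fin n → ℕ) i = 1 := by simp [hβ]
    rw [this]
    simp
  · intro γ hγ
    have : α i < ((γ) + Pi.single i 1 + Pi.single i 1 : Fin n → ℕ) i := by simp; omega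
    rw [mchoose_zero_of_lt i this]
    simp
  · intro β hβ
    rw [hβ]
    simp [Nat.choose_eq_zero_of_lt]
  · intro γ hγ
    have : α i < ((γ) + Pi.single i 1 : Fin n → ℕ) i := by simp; omega
    rw [mchoose_zero_of_lt i this]
    simp

lemma hasFDerivAt_xmono {n : ℕ} (α β : Fin n → ℕ) (z : Fin (n + 1) → ℝ) :
    HasFDerivAt (xmono α β)
      (∑ i : Fin n, (((α i - β i : ℕ) : ℝ) * xmono α (β + Pi.single i 1) z) •
        ContinuousLinearMap.proj (R := ℝ) (φ := fun _ : Fin (n + 1) => ℝ) i.castSucc) z := by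
  classical
  have hfac : ∀ i : Fin n, HasFDerivAt (fun w : Fin (n + 1) → ℝ => w i.castSucc ^ (α i - β i))
      ((((α i - β i : ℕ) : ℝ) * z i.castSucc ^ (α i - β i - 1)) •
        ContinuousLinearMap.proj (R := ℝ) (φ := fun _ : Fin (n + 1) => ℝ) i.castSucc) z := by
    intro i
    have hg := hasDerivAt_pow (α i - β i) (z i.castSucc)
    have hf := (ContinuousLinearMap.proj (R := ℝ) (φ := fun _ : Fin (n + 1) => ℝ)
      i.castSucc).hasFDerivAt (x := z)
    exact hg.comp_hasFDerivAt z hf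
  have h := HasFDerivAt.finset_prod (u := Finset.univ) (fun i _ => hfac i)
  have hfun : (fun w : Fin (n + 1) → ℝ =>
      ∏ i ∈ Finset.univ, w i.castSucc ^ (α i - β i)) = xmono α β := rfl
  rw [hfun] at h
  refine h.congr_fderiv (Eq.symm ?_)
  refine Finset.sum_congr rfl fun i _ => ?_
  rw [smul_smul]
  congr 1
  have hx : xmono α (β + Pi.single i 1) z
      = z i.castSucc ^ (α i - β i - 1) *
        ∏ j ∈ Finset.univ.erase i, z j.castSucc ^ (α j - β j) := by
    unfold xmono
    rw [← Finset.mul_prod_erase _ _ (Finset.mem_univ i)]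
    congr 1
    · congr 1
      simp [Nat.sub_sub]
    · refine Finset.prod_congr rfl fun j hj => ?_
      have : j ≠ i := (Finset.mem_erase.mp hj).1
      simp [Pi.single_eq_of_ne this]
  rw [hx]
  ring

lemma differentiableAt_xmono {n : ℕ} (α β : Fin n → ℕ) (z : Fin (n + 1) → ℝ) :
    DifferentiableAt ℝ (xmono α β) z :=
  (hasFDerivAt_xmono α β z).differentiableAt

lemma pd_xmono_castSucc {n : ℕ} (α β : Fin n → ℕ) (i : Fin n) :
    pd n i.castSucc (xmono α β)
      = fun z => ((α i - β i : ℕ) : ℝ) * xmono α (β + Pi.single i 1) z := by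
  classical
  funext z
  unfold pd
  rw [(hasFDerivAt_xmono α β z).fderiv]
  rw [ContinuousLinearMap.sum_apply]
  rw [Finset.sum_eq_single i]
  · simp
  · intro j _ hj
    have : i.castSucc ≠ j.castSucc := fun h => hj (Fin.castSucc_injective n h).symm
    simp [Pi.single_eq_of_ne this.symm]
  · simp

lemma pd_xmono_last {n : ℕ} (α β : Fin n → ℕ) :
    pd n (Fin.last n) (xmono α β) = 0 := by
  classical
  funext z
  unfold pd
  rw [(hasFDerivAt_xmono α β z).fderiv]
  rw [ContinuousLinearMap.sum_apply]
  refine Finset.sum_eq_zero fun j _ => ?_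
  have : (Fin.last n) ≠ j.castSucc := (Fin.castSucc_lt_last j).ne'
  simp [Pi.single_eq_of_ne this.symm]

lemma contDiff_xmono {n : ℕ} (α β : Fin n → ℕ) : ContDiff ℝ (⊤ : ℕ∞) (xmono α β) := by
  unfold xmono
  apply contDiff_prod
  intro i _
  exact ((ContinuousLinearMap.proj (R := ℝ) (φ := fun _ : Fin (n + 1) => ℝ)
    i.castSucc).contDiff).pow _

lemma pd_congr_nhds {n : ℕ} {f g : (Fin (n + 1) → ℝ) → ℝ} {z : Fin (n + 1) → ℝ}
    (h : f =ᶠ[nhds z] g) (k : Fin (n + 1)) : pd n k f z = pd n k g z := by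
  unfold pd
  rw [h.fderiv_eq]

lemma pd_sum {n : ℕ} {ι : Type*} (s : Finset ι) (f : ι → (Fin (n + 1) → ℝ) → ℝ)
    (k : Fin (n + 1)) (z : Fin (n + 1) → ℝ)
    (hf : ∀ b ∈ s, DifferentiableAt ℝ (f b) z) :
    pd n k (fun w => ∑ b ∈ s, f b w) z = ∑ b ∈ s, pd n k (f b) z := by
  unfold pd
  rw [fderiv_fun_sum hf]
  simp

lemma pd_mul {n : ℕ} {f g : (Fin (n + 1) → ℝ) → ℝ} {z : Fin (n + 1) → ℝ}
    (hf : DifferentiableAt ℝ f z) (hg : DifferentiableAt ℝ g z) (k : Fin (n + 1)) :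
    pd n k (fun w => f w * g w) z = pd n k f z * g z + f z * pd n k g z := by
  unfold pd
  rw [fderiv_fun_mul hf hg]
  simp
  ring

lemma pd_const_mul {n : ℕ} {f : (Fin (n + 1) → ℝ) → ℝ} {z : Fin (n + 1) → ℝ}
    (hf : DifferentiableAt ℝ f z) (c : ℝ) (k : Fin (n + 1)) :
    pd n k (fun w => c * f w) z = c * pd n k f z := by
  unfold pd
  rw [fderiv_const_mul hf]
  simp

lemma contDiff_pd {n : ℕ} {f : (Fin (n + 1) → ℝ) → ℝ} (hf : ContDiff ℝ (⊤ : ℕ∞) f) (k : Fin (n + 1)) :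
    ContDiff ℝ (⊤ : ℕ∞) (pd n k f) := by
  have h1 : ContDiff ℝ (⊤ : ℕ∞) (fderiv ℝ f) := hf.fderiv_right (mod_cast le_top)
  exact h1.clm_apply contDiff_const

lemma contDiffOn_pd {n : ℕ} {O : Set (Fin (n + 1) → ℝ)} (hO : IsOpen O)
    {f : (Fin (n + 1) → ℝ) → ℝ} (hf : ContDiffOn ℝ 2 f O) (k : Fin (n + 1)) :
    ContDiffOn ℝ 1 (pd n k f) O := by
  have h1 : ContDiffOn ℝ 1 (fderiv ℝ f) O := hf.fderiv_of_isOpen hO (by norm_num)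
  exact h1.clm_apply contDiffOn_const

lemma diffAt_of_contDiffOn_one {n : ℕ} {O : Set (Fin (n + 1) → ℝ)} (hO : IsOpen O)
    {f : (Fin (n + 1) → ℝ) → ℝ} (hf : ContDiffOn ℝ 1 f O) {z : Fin (n + 1) → ℝ} (hz : z ∈ O) :
    DifferentiableAt ℝ f z :=
  (hf.differentiableOn one_ne_zero).differentiableAt (hO.mem_nhds hz)

lemma pd_zero {n : ℕ} (k : Fin (n + 1)) : pd n k (0 : (Fin (n + 1) → ℝ) → ℝ) = 0 := by
  funext z
  unfold pd
  rw [show (0 : (Fin (n + 1) → ℝ) → ℝ) = fun _ => (0:ℝ) from rfl, fderiv_fun_const]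
  simp

lemma pd_add {n : ℕ} {f g : (Fin (n + 1) → ℝ) → ℝ} {z : Fin (n + 1) → ℝ}
    (hf : DifferentiableAt ℝ f z) (hg : DifferentiableAt ℝ g z) (k : Fin (n + 1)) :
    pd n k (fun w => f w + g w) z = pd n k f z + pd n k g z := by
  unfold pd
  rw [fderiv_fun_add hf hg]
  simp

lemma pd_prod_sum {n : ℕ} {ι : Type*} (s : Finset ι) (c : ι → ℝ)
    (m f : ι → (Fin (n + 1) → ℝ) → ℝ) (k : Fin (n + 1)) (z : Fin (n + 1) → ℝ)
    (hm : ∀ b ∈ s, DifferentiableAt ℝ (m b) z)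
    (hf : ∀ b ∈ s, DifferentiableAt ℝ (f b) z) :
    pd n k (fun w => ∑ b ∈ s, c b * m b w * f b w) z
      = ∑ b ∈ s, c b * (pd n k (m b) z * f b z + m b z * pd n k (f b) z) := by
  rw [pd_sum s (fun b => fun w => c b * m b w * f b w) k z
    (fun b hb => (((hm b hb).const_mul (c b)).mul (hf b hb)))]
  refine Finset.sum_congr rfl fun b hb => ?_
  rw [pd_mul ((hm b hb).const_mul (c b)) (hf b hb) k, pd_const_mul (hm b hb) (c b) k]
  ring

lemma pd_pd_sum {n : ℕ} {ι : Type*} {O : Set (Fin (n + 1) → ℝ)} (hO : IsOpen O)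
    (s : Finset ι) (c : ι → ℝ) (m f : ι → (Fin (n + 1) → ℝ) → ℝ)
    (hm : ∀ b ∈ s, ContDiff ℝ (⊤ : ℕ∞) (m b))
    (hf : ∀ b ∈ s, ContDiffOn ℝ 2 (f b) O)
    {z : Fin (n + 1) → ℝ} (hz : z ∈ O) (j : Fin (n + 1)) :
    pd n j (pd n j (fun w => ∑ b ∈ s, c b * m b w * f b w)) z
      = ∑ b ∈ s, c b * (pd n j (pd n j (m b)) z * f b z
          + 2 * (pd n j (m b) z * pd n j (f b) z) + m b z * pd n j (pd n j (f b)) z) := by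
  have hfd : ∀ b ∈ s, ∀ w ∈ O, DifferentiableAt ℝ (f b) w := fun b hb w hw =>
    diffAt_of_contDiffOn_one hO ((hf b hb).of_le one_le_two) hw
  have hmd : ∀ b ∈ s, ∀ w, DifferentiableAt ℝ (m b) w := fun b hb w =>
    ((hm b hb).differentiable (by simp)).differentiableAt
  have hpdf : ∀ b ∈ s, ∀ w ∈ O, DifferentiableAt ℝ (pd n j (f b)) w := fun b hb w hw =>
    diffAt_of_contDiffOn_one hO (contDiffOn_pd hO (hf b hb) j) hw
  have hpdm : ∀ b ∈ s, ∀ w, DifferentiableAt ℝ (pd n j (m b)) w := fun b hb w =>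
    ((contDiff_pd (hm b hb) j).differentiable (by simp)).differentiableAt
  have hstep1 : pd n j (pd n j (fun w => ∑ b ∈ s, c b * m b w * f b w)) z
      = pd n j (fun w => ∑ b ∈ s, c b *
          (pd n j (m b) w * f b w + m b w * pd n j (f b) w)) z := by
    refine pd_congr_nhds (Filter.eventuallyEq_of_mem (hO.mem_nhds hz) fun w hw => ?_) j
    exact pd_prod_sum s c m f j w (fun b hb => hmd b hb w) (fun b hb => hfd b hb w hw)
  rw [hstep1]
  rw [pd_sum s (fun b => fun w => c b * (pd n j (m b) w * f b w + m b w * pd n j (f b) w)) j z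
    (fun b hb => (((hpdm b hb z).mul (hfd b hb z hz)).add
      ((hmd b hb z).mul (hpdf b hb z hz))).const_mul (c b))]
  refine Finset.sum_congr rfl fun b hb => ?_
  rw [pd_const_mul (f := fun w => pd n j (m b) w * f b w + m b w * pd n j (f b) w) (((hpdm b hb z).mul (hfd b hb z hz)).add
      ((hmd b hb z).mul (hpdf b hb z hz))) (c b) j,
    pd_add (f := fun w => pd n j (m b) w * f b w) (g := fun w => m b w * pd n j (f b) w) ((hpdm b hb z).mul (hfd b hb z hz)) ((hmd b hb z).mul (hpdf b hb z hz)) j,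
    pd_mul (hpdm b hb z) (hfd b hb z hz) j,
    pd_mul (hmd b hb z) (hpdf b hb z hz) j]
  ring

lemma pd_xmono_eq_sum {n : ℕ} (α β : Fin n → ℕ) (k : Fin (n + 1)) (z : Fin (n + 1) → ℝ) :
    pd n k (xmono α β) z
      = ∑ i : Fin n, ((α i - β i : ℕ) : ℝ) * xmono α (β + Pi.single i 1) z *
          ((Pi.single i.castSucc 1 : Fin (n + 1) → ℝ) k) := by
  classical
  induction k using Fin.lastCases with
  | last =>
    rw [show pd n (Fin.last n) (xmono α β) z = 0 from congrFun (pd_xmono_last α β) z]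
    refine (Finset.sum_eq_zero fun i _ => ?_).symm
    have : i.castSucc ≠ Fin.last n := (Fin.castSucc_lt_last i).ne
    simp [Pi.single_eq_of_ne' this]
  | cast i0 =>
    rw [congrFun (pd_xmono_castSucc α β i0) z]
    rw [Finset.sum_eq_single i0]
    · simp
    · intro j _ hj
      have h2 : (Pi.single j.castSucc 1 : Fin (n+1) → ℝ) i0.castSucc = 0 :=
        Pi.single_eq_of_ne (M := fun _ : Fin (n+1) => ℝ) (fun h => hj (Fin.castSucc_injective n h).symm) 1
      simp [h2]
    · simp


/-- let `O ⊆ ℝ^d` be open, `α ∈ ℤ_{≥0}^{d-1}`, and for every `β ≤ α` let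
`V^β : O → ℝ^d` be `C²` and `Q^β : O → ℝ` be `C¹` (families indexed by integer
multi-indices, with every term whose index has a negative component identically `0`).
Suppose that on `O`, for every `β ≤ α`,
`-ΔV^β + ∇Q^β = F^β := Σᵢ (2 binom(βᵢ,2) V^{β-2εᵢ} + 2 βᵢ ∂ᵢV^{β-εᵢ} - βᵢ Q^{β-εᵢ} eᵢ)` and
`∇·V^β = G^β := -Σᵢ βᵢ (V^{β-εᵢ})ᵢ`.  Then
`v^α(x,y) = Σ_{β≤α} binom(α,β) x^{α-β} V^β(x,y)` and
`q^α(x,y) = Σ_{β≤α} binom(α,β) x^{α-β} Q^β(x,y)` satisfy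
`-Δv^α + ∇q^α = 0` and `∇·v^α = 0` on `O`. -/
theorem stmt14 (n : ℕ) (hn : 1 ≤ n) (O : Set (Fin (n + 1) → ℝ)) (hO : IsOpen O)
    (α : Fin n → ℕ) (V : (Fin n → ℤ) → (Fin (n + 1) → ℝ) → (Fin (n + 1) → ℝ))
    (Q : (Fin n → ℤ) → (Fin (n + 1) → ℝ) → ℝ)
    (hV0 : ∀ γ : Fin n → ℤ, (∃ i, γ i < 0) → V γ = 0)
    (hQ0 : ∀ γ : Fin n → ℤ, (∃ i, γ i < 0) → Q γ = 0)
    (hV2 : ∀ β : Fin n → ℕ, β ≤ α → ∀ k : Fin (n + 1),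
      ContDiffOn ℝ 2 (fun z => V (mcast β) z k) O)
    (hQ1 : ∀ β : Fin n → ℕ, β ≤ α → ContDiffOn ℝ 1 (Q (mcast β)) O)
    (heq : ∀ β : Fin n → ℕ, β ≤ α → ∀ z ∈ O, ∀ k : Fin (n + 1),
      - lapF n (fun w => V (mcast β) w k) z + pd n k (Q (mcast β)) z
        = ∑ i : Fin n,
            (2 * ((β i).choose 2 : ℝ) * V (mcast β - 2 • Pi.single i 1) z k
              + 2 * (β i : ℝ) * pd n i.castSucc (fun w => V (mcast β - Pi.single i 1) w k) z
              - (β i : ℝ) * Q (mcast β - Pi.single i 1) z *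
                  ((Pi.single i.castSucc 1 : Fin (n + 1) → ℝ) k)))
    (hdiv : ∀ β : Fin n → ℕ, β ≤ α → ∀ z ∈ O,
      (∑ k : Fin (n + 1), pd n k (fun w => V (mcast β) w k) z)
        = - ∑ i : Fin n, (β i : ℝ) * V (mcast β - Pi.single i 1) z i.castSucc) :
    (∀ z ∈ O, ∀ k : Fin (n + 1),
      - lapF n (fun w => ∑ β ∈ Finset.Iic α, (mchoose α β : ℝ) * xmono α β w * V (mcast β) w k) z
        + pd n k (fun w => ∑ β ∈ Finset.Iic α, (mchoose α β : ℝ) * xmono α β w * Q (mcast β) w) z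
        = 0) ∧
    (∀ z ∈ O,
      (∑ k : Fin (n + 1),
        pd n k (fun w => ∑ β ∈ Finset.Iic α, (mchoose α β : ℝ) * xmono α β w * V (mcast β) w k) z)
        = 0) := by
  classical
  have hVd : ∀ β ∈ Finset.Iic α, ∀ k : Fin (n + 1), ∀ w ∈ O,
      DifferentiableAt ℝ (fun w' => V (mcast β) w' k) w := fun β hβ k w hw =>
    diffAt_of_contDiffOn_one hO ((hV2 β (Finset.mem_Iic.mp hβ) k).of_le one_le_two) hw
  have hA : ∀ β ∈ Finset.Iic α, ∀ z : Fin (n + 1) → ℝ,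
      (∑ k : Fin (n + 1), pd n k (xmono α β) z * V (mcast β) z k)
        = ∑ i : Fin n, ((α i - β i : ℕ) : ℝ) * xmono α (β + Pi.single i 1) z *
            V (mcast β) z i.castSucc := by
    intro β _ z
    rw [Fin.sum_univ_castSucc]
    rw [show pd n (Fin.last n) (xmono α β) z = 0 from congrFun (pd_xmono_last α β) z]
    simp only [zero_mul, add_zero]
    exact Finset.sum_congr rfl fun i _ => by rw [congrFun (pd_xmono_castSucc α β i) z]
  constructor
  · intro z hz k
    have hQd : ∀ β ∈ Finset.Iic α, ∀ w ∈ O, DifferentiableAt ℝ (Q (mcast β)) w :=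
      fun β hβ w hw => diffAt_of_contDiffOn_one hO (hQ1 β (Finset.mem_Iic.mp hβ)) hw
    have hq : pd n k (fun w => ∑ β ∈ Finset.Iic α,
          (mchoose α β : ℝ) * xmono α β w * Q (mcast β) w) z
        = ∑ β ∈ Finset.Iic α, (mchoose α β : ℝ) *
            (pd n k (xmono α β) z * Q (mcast β) z
              + xmono α β z * pd n k (Q (mcast β)) z) :=
      pd_prod_sum _ _ _ _ k z (fun β _ => differentiableAt_xmono α β z)
        (fun β hβ => hQd β hβ z hz)
    have hlapj : ∀ j : Fin (n + 1),
        pd n j (pd n j (fun w => ∑ β ∈ Finset.Iic α,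
          (mchoose α β : ℝ) * xmono α β w * V (mcast β) w k)) z
        = ∑ β ∈ Finset.Iic α, (mchoose α β : ℝ) *
            (pd n j (pd n j (xmono α β)) z * V (mcast β) z k
              + 2 * (pd n j (xmono α β) z * pd n j (fun w => V (mcast β) w k) z)
              + xmono α β z * pd n j (pd n j (fun w => V (mcast β) w k)) z) := fun j =>
      pd_pd_sum hO _ _ _ _ (fun β _ => contDiff_xmono α β)
        (fun β hβ => hV2 β (Finset.mem_Iic.mp hβ) k) hz j
    have hm2cs : ∀ (i : Fin n) (β : Fin n → ℕ),
        pd n i.castSucc (pd n i.castSucc (xmono α β)) z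
        = ((α i - β i : ℕ) : ℝ) * ((α i - (β i + 1) : ℕ) : ℝ) *
            xmono α (β + Pi.single i 1 + Pi.single i 1) z := by
      intro i β
      rw [pd_xmono_castSucc α β i,
        pd_const_mul (differentiableAt_xmono _ _ z) _ i.castSucc,
        congrFun (pd_xmono_castSucc α (β + Pi.single i 1) i) z]
      have hβi : (β + Pi.single i 1 : Fin n → ℕ) i = β i + 1 := by simp
      rw [hβi]
      ring
    have hm2last : ∀ β : Fin n → ℕ,
        pd n (Fin.last n) (pd n (Fin.last n) (xmono α β)) z = 0 := by
      intro β
      rw [pd_xmono_last α β, pd_zero]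
      rfl
    -- Laplacian expansion
    have hlap : lapF n (fun w => ∑ β ∈ Finset.Iic α,
          (mchoose α β : ℝ) * xmono α β w * V (mcast β) w k) z
        = (∑ β ∈ Finset.Iic α, (mchoose α β : ℝ) *
            (xmono α β z * lapF n (fun w => V (mcast β) w k) z))
          + ∑ i : Fin n, ∑ β ∈ Finset.Iic α, (mchoose α β : ℝ) *
            (((α i - β i : ℕ) : ℝ) * ((α i - (β i + 1) : ℕ) : ℝ) *
                xmono α (β + Pi.single i 1 + Pi.single i 1) z * V (mcast β) z k
              + 2 * (((α i - β i : ℕ) : ℝ) * xmono α (β + Pi.single i 1) z *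
                  pd n i.castSucc (fun w => V (mcast β) w k) z)) := by
      have h0 : lapF n (fun w => ∑ β ∈ Finset.Iic α,
            (mchoose α β : ℝ) * xmono α β w * V (mcast β) w k) z
          = ∑ j : Fin (n + 1), ∑ β ∈ Finset.Iic α, (mchoose α β : ℝ) *
              (pd n j (pd n j (xmono α β)) z * V (mcast β) z k
                + 2 * (pd n j (xmono α β) z * pd n j (fun w => V (mcast β) w k) z)
                + xmono α β z * pd n j (pd n j (fun w => V (mcast β) w k)) z) := by
        unfold lapF
        exact Finset.sum_congr rfl fun j _ => hlapj j
      rw [h0, Fin.sum_univ_castSucc]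
      have hcs : ∀ i : Fin n,
          (∑ β ∈ Finset.Iic α, (mchoose α β : ℝ) *
            (pd n i.castSucc (pd n i.castSucc (xmono α β)) z * V (mcast β) z k
              + 2 * (pd n i.castSucc (xmono α β) z *
                  pd n i.castSucc (fun w => V (mcast β) w k) z)
              + xmono α β z * pd n i.castSucc (pd n i.castSucc
                  (fun w => V (mcast β) w k)) z))
          = (∑ β ∈ Finset.Iic α, (mchoose α β : ℝ) *
            (((α i - β i : ℕ) : ℝ) * ((α i - (β i + 1) : ℕ) : ℝ) *
                xmono α (β + Pi.single i 1 + Pi.single i 1) z * V (mcast β) z k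
              + 2 * (((α i - β i : ℕ) : ℝ) * xmono α (β + Pi.single i 1) z *
                  pd n i.castSucc (fun w => V (mcast β) w k) z)))
            + ∑ β ∈ Finset.Iic α, (mchoose α β : ℝ) *
                (xmono α β z * pd n i.castSucc (pd n i.castSucc
                    (fun w => V (mcast β) w k)) z) := by
        intro i
        rw [← Finset.sum_add_distrib]
        refine Finset.sum_congr rfl fun β _ => ?_
        rw [hm2cs i β, congrFun (pd_xmono_castSucc α β i) z]
        ring
      have hlast :
          (∑ β ∈ Finset.Iic α, (mchoose α β : ℝ) *
            (pd n (Fin.last n) (pd n (Fin.last n) (xmono α β)) z * V (mcast β) z k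
              + 2 * (pd n (Fin.last n) (xmono α β) z *
                  pd n (Fin.last n) (fun w => V (mcast β) w k) z)
              + xmono α β z * pd n (Fin.last n) (pd n (Fin.last n)
                  (fun w => V (mcast β) w k)) z))
          = ∑ β ∈ Finset.Iic α, (mchoose α β : ℝ) *
              (xmono α β z * pd n (Fin.last n) (pd n (Fin.last n)
                  (fun w => V (mcast β) w k)) z) := by
        refine Finset.sum_congr rfl fun β _ => ?_
        rw [hm2last β, show pd n (Fin.last n) (xmono α β) z = 0 from
          congrFun (pd_xmono_last α β) z]
        ring
      rw [hlast, Finset.sum_congr rfl fun i _ => hcs i, Finset.sum_add_distrib]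
      have hmix : (∑ i : Fin n, ∑ β ∈ Finset.Iic α, (mchoose α β : ℝ) *
            (xmono α β z * pd n i.castSucc (pd n i.castSucc
                (fun w => V (mcast β) w k)) z))
          + (∑ β ∈ Finset.Iic α, (mchoose α β : ℝ) *
              (xmono α β z * pd n (Fin.last n) (pd n (Fin.last n)
                  (fun w => V (mcast β) w k)) z))
          = ∑ β ∈ Finset.Iic α, (mchoose α β : ℝ) *
              (xmono α β z * lapF n (fun w => V (mcast β) w k) z) := by
        rw [Finset.sum_comm, ← Finset.sum_add_distrib]
        refine Finset.sum_congr rfl fun β _ => ?_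
        have : lapF n (fun w => V (mcast β) w k) z
            = (∑ i : Fin n, pd n i.castSucc (pd n i.castSucc
                (fun w => V (mcast β) w k)) z)
              + pd n (Fin.last n) (pd n (Fin.last n) (fun w => V (mcast β) w k)) z := by
          unfold lapF
          rw [Fin.sum_univ_castSucc]
        rw [this, mul_add, mul_add, Finset.mul_sum, Finset.mul_sum]
      rw [add_assoc, hmix]
      ring
    -- the per-direction cancellation
    have hper : ∀ i : Fin n,
        (∑ β ∈ Finset.Iic α, (mchoose α β : ℝ) * xmono α β z *
          (2 * ((β i).choose 2 : ℝ) * V (mcast β - 2 • Pi.single i 1) z k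
            + 2 * (β i : ℝ) * pd n i.castSucc (fun w => V (mcast β - Pi.single i 1) w k) z
            - (β i : ℝ) * Q (mcast β - Pi.single i 1) z *
                ((Pi.single i.castSucc 1 : Fin (n + 1) → ℝ) k)))
        + (∑ β ∈ Finset.Iic α, (mchoose α β : ℝ) * xmono α (β + Pi.single i 1) z *
            (((α i - β i : ℕ) : ℝ) * (Q (mcast β) z *
              ((Pi.single i.castSucc 1 : Fin (n + 1) → ℝ) k))))
        = ∑ β ∈ Finset.Iic α, (mchoose α β : ℝ) *
            (((α i - β i : ℕ) : ℝ) * ((α i - (β i + 1) : ℕ) : ℝ) *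
                xmono α (β + Pi.single i 1 + Pi.single i 1) z * V (mcast β) z k
              + 2 * (((α i - β i : ℕ) : ℝ) * xmono α (β + Pi.single i 1) z *
                  pd n i.castSucc (fun w => V (mcast β) w k) z)) := by
      intro i
      have K2 := key2 α i (fun δ => V δ z k) z
      have K1a := key1 α i (fun δ => 2 * pd n i.castSucc (fun w => V δ w k) z) z
      have K1b := key1 α i (fun δ => Q δ z *
        ((Pi.single i.castSucc 1 : Fin (n + 1) → ℝ) k)) z
      have hsplit : (∑ β ∈ Finset.Iic α, (mchoose α β : ℝ) * xmono α β z *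
          (2 * ((β i).choose 2 : ℝ) * V (mcast β - 2 • Pi.single i 1) z k
            + 2 * (β i : ℝ) * pd n i.castSucc (fun w => V (mcast β - Pi.single i 1) w k) z
            - (β i : ℝ) * Q (mcast β - Pi.single i 1) z *
                ((Pi.single i.castSucc 1 : Fin (n + 1) → ℝ) k)))
          = ((∑ β ∈ Finset.Iic α, (mchoose α β : ℝ) * xmono α β z *
              (2 * ((β i).choose 2 : ℝ) * V (mcast β - 2 • Pi.single i 1) z k))
            + ∑ β ∈ Finset.Iic α, (mchoose α β : ℝ) * xmono α β z *
              ((β i : ℝ) * (2 * pd n i.castSucc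
                (fun w => V (mcast β - Pi.single i 1) w k) z)))
            - ∑ β ∈ Finset.Iic α, (mchoose α β : ℝ) * xmono α β z *
              ((β i : ℝ) * (Q (mcast β - Pi.single i 1) z *
                ((Pi.single i.castSucc 1 : Fin (n + 1) → ℝ) k))) := by
        rw [← Finset.sum_add_distrib, ← Finset.sum_sub_distrib]
        exact Finset.sum_congr rfl fun β _ => by ring
      rw [hsplit, K2, K1a, K1b, sub_add_cancel, ← Finset.sum_add_distrib]
      exact Finset.sum_congr rfl fun β _ => by ring
    -- assemble
    have hqsplit : (∑ β ∈ Finset.Iic α, (mchoose α β : ℝ) *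
          (pd n k (xmono α β) z * Q (mcast β) z
            + xmono α β z * pd n k (Q (mcast β)) z))
        = (∑ i : Fin n, ∑ β ∈ Finset.Iic α, (mchoose α β : ℝ) *
            xmono α (β + Pi.single i 1) z * (((α i - β i : ℕ) : ℝ) * (Q (mcast β) z *
              ((Pi.single i.castSucc 1 : Fin (n + 1) → ℝ) k))))
          + ∑ β ∈ Finset.Iic α, (mchoose α β : ℝ) *
              (xmono α β z * pd n k (Q (mcast β)) z) := by
      rw [show (∑ β ∈ Finset.Iic α, (mchoose α β : ℝ) *
          (pd n k (xmono α β) z * Q (mcast β) z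
            + xmono α β z * pd n k (Q (mcast β)) z))
          = ∑ β ∈ Finset.Iic α, ((mchoose α β : ℝ) *
              (pd n k (xmono α β) z * Q (mcast β) z)
            + (mchoose α β : ℝ) * (xmono α β z * pd n k (Q (mcast β)) z)) from
        Finset.sum_congr rfl fun β _ => mul_add _ _ _]
      rw [Finset.sum_add_distrib]
      congr 1
      rw [Finset.sum_comm]
      refine Finset.sum_congr rfl fun β _ => ?_
      rw [pd_xmono_eq_sum α β k z, Finset.sum_mul, Finset.mul_sum]
      exact Finset.sum_congr rfl fun i _ => by ring
    have hheq : (∑ β ∈ Finset.Iic α, (mchoose α β : ℝ) *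
          (xmono α β z * pd n k (Q (mcast β)) z))
        - (∑ β ∈ Finset.Iic α, (mchoose α β : ℝ) *
            (xmono α β z * lapF n (fun w => V (mcast β) w k) z))
        = ∑ i : Fin n, ∑ β ∈ Finset.Iic α, (mchoose α β : ℝ) * xmono α β z *
            (2 * ((β i).choose 2 : ℝ) * V (mcast β - 2 • Pi.single i 1) z k
              + 2 * (β i : ℝ) * pd n i.castSucc
                  (fun w => V (mcast β - Pi.single i 1) w k) z
              - (β i : ℝ) * Q (mcast β - Pi.single i 1) z *
                  ((Pi.single i.castSucc 1 : Fin (n + 1) → ℝ) k)) := by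
      rw [← Finset.sum_sub_distrib, Finset.sum_comm]
      refine Finset.sum_congr rfl fun β hβ => ?_
      have hb := heq β (Finset.mem_Iic.mp hβ) z hz k
      calc (mchoose α β : ℝ) * (xmono α β z * pd n k (Q (mcast β)) z)
          - (mchoose α β : ℝ) * (xmono α β z * lapF n (fun w => V (mcast β) w k) z)
          = (mchoose α β : ℝ) * xmono α β z *
            (- lapF n (fun w => V (mcast β) w k) z + pd n k (Q (mcast β)) z) := by ring
        _ = (mchoose α β : ℝ) * xmono α β z * (∑ i : Fin n,
              (2 * ((β i).choose 2 : ℝ) * V (mcast β - 2 • Pi.single i 1) z k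
                + 2 * (β i : ℝ) * pd n i.castSucc
                    (fun w => V (mcast β - Pi.single i 1) w k) z
                - (β i : ℝ) * Q (mcast β - Pi.single i 1) z *
                    ((Pi.single i.castSucc 1 : Fin (n + 1) → ℝ) k))) := by rw [hb]
        _ = _ := Finset.mul_sum _ _ _
    have e0 : (∑ i : Fin n, ∑ β ∈ Finset.Iic α, (mchoose α β : ℝ) * xmono α β z *
            (2 * ((β i).choose 2 : ℝ) * V (mcast β - 2 • Pi.single i 1) z k
              + 2 * (β i : ℝ) * pd n i.castSucc
                  (fun w => V (mcast β - Pi.single i 1) w k) z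
              - (β i : ℝ) * Q (mcast β - Pi.single i 1) z *
                  ((Pi.single i.castSucc 1 : Fin (n + 1) → ℝ) k)))
        + (∑ i : Fin n, ∑ β ∈ Finset.Iic α, (mchoose α β : ℝ) *
            xmono α (β + Pi.single i 1) z * (((α i - β i : ℕ) : ℝ) * (Q (mcast β) z *
              ((Pi.single i.castSucc 1 : Fin (n + 1) → ℝ) k))))
        = ∑ i : Fin n, ∑ β ∈ Finset.Iic α, (mchoose α β : ℝ) *
            (((α i - β i : ℕ) : ℝ) * ((α i - (β i + 1) : ℕ) : ℝ) *
                xmono α (β + Pi.single i 1 + Pi.single i 1) z * V (mcast β) z k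
              + 2 * (((α i - β i : ℕ) : ℝ) * xmono α (β + Pi.single i 1) z *
                  pd n i.castSucc (fun w => V (mcast β) w k) z)) := by
      rw [← Finset.sum_add_distrib]
      exact Finset.sum_congr rfl fun i _ => hper i
    rw [hlap, hq, hqsplit]
    linear_combination hheq + e0

  · -- divergence part
    intro z hz
    have hexp : ∀ k : Fin (n + 1),
        pd n k (fun w => ∑ β ∈ Finset.Iic α,
          (mchoose α β : ℝ) * xmono α β w * V (mcast β) w k) z
        = ∑ β ∈ Finset.Iic α, (mchoose α β : ℝ) *
            (pd n k (xmono α β) z * V (mcast β) z k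
              + xmono α β z * pd n k (fun w => V (mcast β) w k) z) := fun k =>
      pd_prod_sum _ _ _ _ k z (fun β _ => differentiableAt_xmono α β z)
        (fun β hβ => hVd β hβ k z hz)
    calc (∑ k : Fin (n + 1),
        pd n k (fun w => ∑ β ∈ Finset.Iic α,
          (mchoose α β : ℝ) * xmono α β w * V (mcast β) w k) z)
        = ∑ k : Fin (n + 1), ∑ β ∈ Finset.Iic α, (mchoose α β : ℝ) *
            (pd n k (xmono α β) z * V (mcast β) z k
              + xmono α β z * pd n k (fun w => V (mcast β) w k) z) :=
          Finset.sum_congr rfl fun k _ => hexp k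
      _ = ∑ β ∈ Finset.Iic α, ∑ k : Fin (n + 1), (mchoose α β : ℝ) *
            (pd n k (xmono α β) z * V (mcast β) z k
              + xmono α β z * pd n k (fun w => V (mcast β) w k) z) := Finset.sum_comm
      _ = ∑ β ∈ Finset.Iic α, ∑ i : Fin n,
            ((mchoose α β : ℝ) * xmono α (β + Pi.single i 1) z *
              (((α i - β i : ℕ) : ℝ) * V (mcast β) z i.castSucc)
            - (mchoose α β : ℝ) * xmono α β z *
              ((β i : ℝ) * V (mcast β - Pi.single i 1) z i.castSucc)) := by
          refine Finset.sum_congr rfl fun β hβ => ?_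
          rw [← Finset.mul_sum, Finset.sum_add_distrib, hA β hβ z, ← Finset.mul_sum,
            hdiv β (Finset.mem_Iic.mp hβ) z hz, mul_add, Finset.mul_sum,
            Finset.sum_sub_distrib]
          congr 1
          · exact Finset.sum_congr rfl fun i _ => by ring
          · simp only [mul_neg]
            rw [neg_inj, Finset.mul_sum, Finset.mul_sum]
            exact Finset.sum_congr rfl fun i _ => by ring
      _ = ∑ i : Fin n, ((∑ β ∈ Finset.Iic α, (mchoose α β : ℝ) * xmono α (β + Pi.single i 1) z *
              (((α i - β i : ℕ) : ℝ) * V (mcast β) z i.castSucc))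
            - ∑ β ∈ Finset.Iic α, (mchoose α β : ℝ) * xmono α β z *
              ((β i : ℝ) * V (mcast β - Pi.single i 1) z i.castSucc)) := by
          rw [Finset.sum_comm]
          exact Finset.sum_congr rfl fun i _ => Finset.sum_sub_distrib _ _
      _ = 0 := Finset.sum_eq_zero fun i _ => by
          rw [← key1 α i (fun δ => V δ z i.castSucc) z]
          exact sub_self _
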